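/- Let (Z, μ) be a finite measure space, let B be a positive natural number, and for each b ∈ Fin B let c_b : Z → ℝ be a measurable, nonnegative, μ-integrable function. Define f* : Z → Fin B by f*(ω) = the smallest index b attaining min_{j ∈ Fin B} c_j(ω). Then f* is measurable, the sets A_b* = (f*)⁻¹({b}) form a measurable partition of Z, and ∑_b ∫_{A_b*} c_b dμ = ∫_Z (min_{b} c_b(ω)) dμ(ω); consequently {A_b*} minimizes ∑_b ∫_{A_b} c_b dμ over all measurable partitions {A_b} of Z. -/

import Mathlib

/-!
Pointwise, `c (f* ω) ω = min_b c b ω ≤ c b ω` for every `b`. Splitting `∫ min_b c b` along any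
measurable partition `A` therefore bounds it by the cost `∑ b, ∫_{A b} c b` of `A`, with equality
when `A` is the partition into the fibres of `f*`.
-/

open MeasureTheory

open scoped Classical

/-- The smallest index attaining the minimum of `c : Fin B → ℝ`. -/
noncomputable def leastArgmin {B : ℕ} (hB : 0 < B) (c : Fin B → ℝ) : Fin B :=
  (Finset.univ.filter fun b => ∀ j, c b ≤ c j).min' (by
    obtain ⟨b, -, hb⟩ := Finset.exists_min_image Finset.univ c ⟨⟨0, hB⟩, Finset.mem_univ _⟩
    exact ⟨b, Finset.mem_filter.mpr ⟨Finset.mem_univ _, fun j => hb j (Finset.mem_univ _)⟩⟩)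

section leastArgmin

variable {B : ℕ} (hB : 0 < B) (c : Fin B → ℝ)

lemma leastArgmin_le_apply (j : Fin B) : c (leastArgmin hB c) ≤ c j :=
  (Finset.mem_filter.mp (Finset.min'_mem (Finset.univ.filter fun b => ∀ j, c b ≤ c j) _)).2 j

lemma leastArgmin_le_of_forall_le {i : Fin B} (hi : ∀ j, c i ≤ c j) : leastArgmin hB c ≤ i :=
  Finset.min'_le _ _ (Finset.mem_filter.mpr ⟨Finset.mem_univ _, hi⟩)

lemma apply_leastArgmin (hne : (Finset.univ : Finset (Fin B)).Nonempty) :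
    c (leastArgmin hB c) = Finset.univ.inf' hne c :=
  le_antisymm (Finset.le_inf' _ _ fun j _ => leastArgmin_le_apply hB c j)
    (Finset.inf'_le _ (Finset.mem_univ _))

lemma leastArgmin_eq_iff (b : Fin B) :
    leastArgmin hB c = b ↔ (∀ j, c b ≤ c j) ∧ ∀ i < b, c b < c i := by
  constructor
  · rintro rfl
    refine ⟨leastArgmin_le_apply hB c, fun i hi => lt_of_not_ge fun h => hi.not_ge ?_⟩
    exact leastArgmin_le_of_forall_le hB c fun j => h.trans (leastArgmin_le_apply hB c j)
  · rintro ⟨hmin, hfirst⟩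
    refine le_antisymm (leastArgmin_le_of_forall_le hB c hmin) (not_lt.mp fun hlt => ?_)
    exact (hfirst _ hlt).not_ge (leastArgmin_le_apply hB c b)

end leastArgmin

lemma measurable_leastArgmin {Z : Type*} [MeasurableSpace Z] {B : ℕ} (hB : 0 < B)
    {c : Fin B → Z → ℝ} (hc : ∀ b, Measurable (c b)) :
    Measurable fun ω => leastArgmin hB fun b => c b ω := by
  refine measurable_to_countable' fun b => ?_
  have hfibre : (fun ω => leastArgmin hB fun b => c b ω) ⁻¹' {b} =
      (⋂ j, {ω | c b ω ≤ c j ω}) ∩ ⋂ i, ⋂ (_ : i < b), {ω | c b ω < c i ω} := by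
    ext ω
    simp [leastArgmin_eq_iff]
  rw [hfibre]
  exact (MeasurableSet.iInter fun j => measurableSet_le (hc b) (hc j)).inter
    (MeasurableSet.iInter fun i => MeasurableSet.iInter fun _ => measurableSet_lt (hc b) (hc i))

lemma MeasureTheory.Integrable.finset_inf' {Z ι β : Type*} [MeasurableSpace Z] {μ : Measure Z}
    [NormedAddCommGroup β] [Lattice β] [HasSolidNorm β] [IsOrderedAddMonoid β]
    {s : Finset ι} (hs : s.Nonempty) {f : ι → Z → β} (hf : ∀ i ∈ s, Integrable (f i) μ) :
    Integrable (fun ω => s.inf' hs fun i => f i ω) μ := by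
  simpa only [← Finset.inf'_apply] using
    Finset.inf'_induction hs f (p := (Integrable · μ)) (fun _ h₁ _ h₂ => h₁.inf h₂) hf

section Partition

variable {Z ι : Type*} [MeasurableSpace Z] {μ : Measure Z} [Fintype ι] {A : ι → Set Z}

lemma sum_setIntegral_eq_integral_of_partition {E : Type*} [NormedAddCommGroup E]
    [NormedSpace ℝ E] (hA : ∀ i, MeasurableSet (A i)) (hAd : Pairwise (Function.onFun Disjoint A))
    (hAc : ⋃ i, A i = Set.univ) {g : Z → E} (hg : Integrable g μ) :
    ∑ i, ∫ ω in A i, g ω ∂μ = ∫ ω, g ω ∂μ := by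
  rw [← integral_iUnion_fintype hA hAd fun _ => hg.integrableOn, hAc, setIntegral_univ]

lemma integral_inf'_le_sum_setIntegral (hA : ∀ i, MeasurableSet (A i))
    (hAd : Pairwise (Function.onFun Disjoint A)) (hAc : ⋃ i, A i = Set.univ)
    {c : ι → Z → ℝ} (hc : ∀ i, Integrable (c i) μ) (hne : (Finset.univ : Finset ι).Nonempty) :
    ∫ ω, Finset.univ.inf' hne (fun i => c i ω) ∂μ ≤ ∑ i, ∫ ω in A i, c i ω ∂μ := by
  have hinf := Integrable.finset_inf' hne fun i _ => hc i
  rw [← sum_setIntegral_eq_integral_of_partition hA hAd hAc hinf]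
  exact Finset.sum_le_sum fun i _ => setIntegral_mono_on hinf.integrableOn (hc i).integrableOn
    (hA i) fun ω _ => Finset.inf'_le _ (Finset.mem_univ i)

end Partition

theorem argmin_partition_optimal_general
    {Z : Type*} [MeasurableSpace Z] (μ : Measure Z)
    (B : ℕ) (hB : 0 < B) (c : Fin B → Z → ℝ)
    (hmeas : ∀ b, Measurable (c b))
    (hint : ∀ b, Integrable (c b) μ) :
    Measurable (fun ω => leastArgmin hB (fun b => c b ω)) ∧
    (∀ b, MeasurableSet {ω | leastArgmin hB (fun j => c j ω) = b}) ∧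
    Pairwise (Function.onFun Disjoint (fun b => {ω | leastArgmin hB (fun j => c j ω) = b})) ∧
    (⋃ b, {ω | leastArgmin hB (fun j => c j ω) = b}) = Set.univ ∧
    (∑ b, ∫ ω in {ω | leastArgmin hB (fun j => c j ω) = b}, c b ω ∂μ
        = ∫ ω, Finset.univ.inf'
            (⟨⟨0, hB⟩, Finset.mem_univ _⟩ : (Finset.univ : Finset (Fin B)).Nonempty)
            (fun b => c b ω) ∂μ) ∧
    (∀ A : Fin B → Set Z, (∀ b, MeasurableSet (A b)) →
        Pairwise (Function.onFun Disjoint A) → (⋃ b, A b) = Set.univ →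
        ∑ b, ∫ ω in {ω | leastArgmin hB (fun j => c j ω) = b}, c b ω ∂μ
          ≤ ∑ b, ∫ ω in A b, c b ω ∂μ) := by
  set f : Z → Fin B := fun ω => leastArgmin hB fun b => c b ω
  have hf : Measurable f := measurable_leastArgmin hB hmeas
  have hfibre : ∀ b, MeasurableSet (f ⁻¹' {b}) := fun b => hf (measurableSet_singleton b)
  have hdisj : Pairwise (Function.onFun Disjoint fun b => f ⁻¹' {b}) := pairwise_disjoint_fiber f
  have hcover : ⋃ b, f ⁻¹' {b} = Set.univ := Set.iUnion_eq_univ_iff.mpr fun ω => ⟨f ω, rfl⟩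
  have hne : (Finset.univ : Finset (Fin B)).Nonempty := ⟨⟨0, hB⟩, Finset.mem_univ _⟩
  have hcost : ∑ b, ∫ ω in f ⁻¹' {b}, c b ω ∂μ =
      ∫ ω, Finset.univ.inf' hne (fun b => c b ω) ∂μ := by
    rw [← sum_setIntegral_eq_integral_of_partition hfibre hdisj hcover
      (Integrable.finset_inf' hne fun b _ => hint b)]
    refine Finset.sum_congr rfl fun b _ => setIntegral_congr_fun (hfibre b) fun ω hω => ?_
    rw [← show f ω = b from hω]
    exact apply_leastArgmin hB (fun j => c j ω) hne
  exact ⟨hf, hfibre, hdisj, hcover, hcost, fun A hA hAd hAc =>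
    hcost ▸ integral_inf'_le_sum_setIntegral hA hAd hAc hint hne⟩

/-- **Attainment half of Proposition 1.** The partition `A_b* = (f*)⁻¹ {b}` induced by the
least-index argmin map `f*` is a measurable partition whose total cost equals
`∫_Z min_b c b dμ`, and hence it minimizes the total cost over all measurable partitions. -/
theorem argmin_partition_optimal
    {Z : Type*} [MeasurableSpace Z] (μ : Measure Z) [IsFiniteMeasure μ]
    (B : ℕ) (hB : 0 < B) (c : Fin B → Z → ℝ)
    (hmeas : ∀ b, Measurable (c b))
    (hnonneg : ∀ b, ∀ ω, 0 ≤ c b ω)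
    (hint : ∀ b, Integrable (c b) μ) :
    Measurable (fun ω => leastArgmin hB (fun b => c b ω)) ∧
    (∀ b, MeasurableSet {ω | leastArgmin hB (fun j => c j ω) = b}) ∧
    Pairwise (Function.onFun Disjoint (fun b => {ω | leastArgmin hB (fun j => c j ω) = b})) ∧
    (⋃ b, {ω | leastArgmin hB (fun j => c j ω) = b}) = Set.univ ∧
    (∑ b, ∫ ω in {ω | leastArgmin hB (fun j => c j ω) = b}, c b ω ∂μ
        = ∫ ω, Finset.univ.inf'
            (⟨⟨0, hB⟩, Finset.mem_univ _⟩ : (Finset.univ : Finset (Fin B)).Nonempty)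
            (fun b => c b ω) ∂μ) ∧
    (∀ A : Fin B → Set Z, (∀ b, MeasurableSet (A b)) →
        Pairwise (Function.onFun Disjoint A) → (⋃ b, A b) = Set.univ →
        ∑ b, ∫ ω in {ω | leastArgmin hB (fun j => c j ω) = b}, c b ω ∂μ
          ≤ ∑ b, ∫ ω in A b, c b ω ∂μ) :=
  argmin_partition_optimal_general μ B hB c hmeas hint
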